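/- Fix M > 0 and let V_L(r) = (1/r²)(1 − 2M/r). Then for all r > 2M the angular trapping term satisfies the identity 2V_L(r) + r_*(r)·(1 − 2M/r)·(dV_L/dr)(r) = (2/r⁴)(1 − 2M/r)(r² − r_*(r)(r − 3M)), and there exists R > 0 such that this quantity is nonpositive for every r ∈ (2M, ∞) with |r_*(r)| ≥ R; in other words, the trapping term 2V_L + r_* (dV_L/dr_*) is positive only in a compact region of the tortoise coordinate. -/

import Mathlib

/-!
Since `dV_L/dr = 2(3M - r)/r⁴`, the trapping term equals `(2/r⁴)(1 - 2M/r)` times the factor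
`r² - r_*(r - 3M)`, and only the sign of this factor matters. The tortoise coordinate is strictly
increasing, tends to `-∞` at the horizon and grows like `r + 2M log r` at infinity. Hence a large
negative `r_*` forces `r` close to `2M`, where `r - 3M < 0` makes `-r_*(r - 3M)` dominate `r²`,
while a large positive `r_*` forces `r` large with `r_* ≥ r + 12M`, and then
`r_*(r - 3M) ≥ (r + 12M)(r - 3M) ≥ r²`.
-/

open Set

noncomputable section

namespace Schwarzschild

def tortoise (M r : ℝ) : ℝ :=
  r + 2 * M * Real.log ((r - 2 * M) / (2 * M)) - 3 * M + 2 * M * Real.log 2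

def angularPotential (M r : ℝ) : ℝ :=
  (1 / r ^ 2) * (1 - 2 * M / r)

theorem hasDerivAt_angularPotential (M : ℝ) {r : ℝ} (hr : r ≠ 0) :
    HasDerivAt (angularPotential M) (2 * (3 * M - r) / r ^ 4) r := by
  have hinv : HasDerivAt (fun x : ℝ => 1 / x ^ 2) (-(2 * r) / (r ^ 2) ^ 2) r := by
    simpa [one_div, Pi.inv_def] using (hasDerivAt_pow 2 r).inv (pow_ne_zero 2 hr)
  have hlapse : HasDerivAt (fun x : ℝ => 1 - 2 * M / x) (-((0 * r - 2 * M * 1) / r ^ 2)) r :=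
    ((hasDerivAt_const r (2 * M)).div (hasDerivAt_id r) hr).const_sub 1
  refine (hinv.fun_mul hlapse).congr_deriv ?_
  field_simp
  ring

theorem trappingTerm_eq (M s : ℝ) {r : ℝ} (hr : r ≠ 0) :
    2 * angularPotential M r + s * ((1 - 2 * M / r) * (2 * (3 * M - r) / r ^ 4))
      = (2 / r ^ 4) * (1 - 2 * M / r) * (r ^ 2 - s * (r - 3 * M)) := by
  unfold angularPotential
  field_simp
  ring

theorem tortoise_eq {M r : ℝ} (hM : 0 < M) (hr : 2 * M < r) :
    tortoise M r = r - 3 * M + 2 * M * Real.log ((r - 2 * M) / M) := by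
  have hquot : (r - 2 * M) / M = (r - 2 * M) / (2 * M) * 2 := by field_simp
  rw [tortoise, hquot, Real.log_mul (div_pos (by linarith) (by positivity)).ne' two_ne_zero]
  ring

theorem strictMonoOn_tortoise {M : ℝ} (hM : 0 < M) : StrictMonoOn (tortoise M) (Ioi (2 * M)) := by
  intro a ha b _ hab
  have hlog : Real.log ((a - 2 * M) / M) ≤ Real.log ((b - 2 * M) / M) :=
    Real.log_le_log (div_pos (sub_pos.2 ha) hM) (by gcongr)
  rw [tortoise_eq hM ha, tortoise_eq hM (ha.trans hab)]
  nlinarith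

theorem add_le_tortoise {M r : ℝ} (hM : 0 < M) (hr : 2 * M + M * Real.exp (15 / 2) ≤ r) :
    r + 12 * M ≤ tortoise M r := by
  have hexp : 0 < M * Real.exp (15 / 2) := by positivity
  have hlog : 15 / 2 ≤ Real.log ((r - 2 * M) / M) := by
    rw [Real.le_log_iff_exp_le (div_pos (by linarith) hM), le_div_iff₀ hM]
    linarith
  rw [tortoise_eq hM (by linarith)]
  nlinarith

theorem trappingFactor_nonpos_of_far {M r s : ℝ} (hM : 0 ≤ M) (hr : 4 * M ≤ r)
    (hs : r + 12 * M ≤ s) : r ^ 2 - s * (r - 3 * M) ≤ 0 := by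
  nlinarith [mul_le_mul_of_nonneg_right hs (by linarith : 0 ≤ r - 3 * M)]

theorem trappingFactor_nonpos_of_near {M r s : ℝ} (hr₀ : 0 ≤ r) (hr : r ≤ 5 * M / 2)
    (hs : s ≤ -(13 * M)) : r ^ 2 - s * (r - 3 * M) ≤ 0 := by
  have hM : 0 ≤ M := by linarith
  nlinarith [mul_le_mul (by linarith : 13 * M ≤ -s) (by linarith : M / 2 ≤ 3 * M - r)
    (by linarith : 0 ≤ M / 2) (by linarith : 0 ≤ -s)]

theorem exists_trappingFactor_nonpos {M : ℝ} (hM : 0 < M) :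
    ∃ R : ℝ, 0 < R ∧ ∀ r : ℝ, 2 * M < r → R ≤ |tortoise M r| →
      r ^ 2 - tortoise M r * (r - 3 * M) ≤ 0 := by
  set rNear : ℝ := 5 * M / 2
  set rFar : ℝ := 2 * M + M * Real.exp (15 / 2)
  have hNear : rNear ∈ Ioi (2 * M) := by simp only [rNear, mem_Ioi]; linarith
  have hFar : rFar ∈ Ioi (2 * M) := by simp only [rFar, mem_Ioi]; linarith [mul_pos hM (Real.exp_pos (15 / 2))]
  refine ⟨13 * M + |tortoise M rNear| + |tortoise M rFar|, by positivity, fun r hr hR => ?_⟩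
  have hrFar := abs_nonneg (tortoise M rFar)
  have hrNear := abs_nonneg (tortoise M rNear)
  rcases le_abs'.mp hR with hneg | hpos
  · have hlt : tortoise M r < tortoise M rNear := by linarith [neg_abs_le (tortoise M rNear)]
    have hr_near : r < rNear := (strictMonoOn_tortoise hM).lt_iff_lt hr hNear |>.mp hlt
    exact trappingFactor_nonpos_of_near (by linarith) hr_near.le (by linarith)
  · have hlt : tortoise M rFar < tortoise M r := by linarith [le_abs_self (tortoise M rFar)]
    have hr_far : rFar < r := (strictMonoOn_tortoise hM).lt_iff_lt hFar hr |>.mp hlt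
    have h4M : 4 * M ≤ r := by
      nlinarith [Real.add_one_le_exp (15 / 2 : ℝ)]
    exact trappingFactor_nonpos_of_far hM.le h4M (add_le_tortoise hM hr_far.le)

end Schwarzschild

end

open Schwarzschild in
/-- Fix `M > 0` and let `V_L(r) = (1/r²)(1 − 2M/r)`.  Then for all
`r > 2M` the angular trapping term satisfies the identity
`2V_L(r) + r_*(r)·(1 − 2M/r)·(dV_L/dr)(r) = (2/r⁴)(1 − 2M/r)(r² − r_*(r)(r − 3M))`,
and there exists `R > 0` such that this quantity is nonpositive for every
`r ∈ (2M, ∞)` with `|r_*(r)| ≥ R`; in other words, the trapping term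
`2V_L + r_* (dV_L/dr_*)` is positive only in a compact region of the tortoise
coordinate. -/
theorem angular_trapping_term_compact_support (M : ℝ) (hM : 0 < M)
    (rstar : ℝ → ℝ)
    (hrstar : ∀ r : ℝ, rstar r =
      r + 2 * M * Real.log ((r - 2 * M) / (2 * M)) - 3 * M + 2 * M * Real.log 2)
    (VL : ℝ → ℝ) (hVL : ∀ r : ℝ, VL r = (1 / r ^ 2) * (1 - 2 * M / r)) :
    (∀ r : ℝ, 2 * M < r →
      2 * VL r + rstar r * ((1 - 2 * M / r) * deriv VL r)
        = (2 / r ^ 4) * (1 - 2 * M / r) * (r ^ 2 - rstar r * (r - 3 * M))) ∧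
    (∃ R : ℝ, 0 < R ∧ ∀ r : ℝ, 2 * M < r → R ≤ |rstar r| →
      2 * VL r + rstar r * ((1 - 2 * M / r) * deriv VL r) ≤ 0) := by
  obtain rfl : rstar = tortoise M := funext hrstar
  obtain rfl : VL = angularPotential M := funext hVL
  have hidentity : ∀ r : ℝ, 2 * M < r →
      2 * angularPotential M r + tortoise M r * ((1 - 2 * M / r) * deriv (angularPotential M) r)
        = (2 / r ^ 4) * (1 - 2 * M / r) * (r ^ 2 - tortoise M r * (r - 3 * M)) := by
    intro r hr
    have hr₀ : r ≠ 0 := by linarith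
    rw [(hasDerivAt_angularPotential M hr₀).deriv, trappingTerm_eq M _ hr₀]
  refine ⟨hidentity, ?_⟩
  obtain ⟨R, hR, hfactor⟩ := exists_trappingFactor_nonpos hM
  refine ⟨R, hR, fun r hr hRr => ?_⟩
  have hr₀ : 0 < r := by linarith
  have hlapse : 0 ≤ 1 - 2 * M / r := sub_nonneg.2 ((div_le_one hr₀).2 hr.le)
  rw [hidentity r hr]
  exact mul_nonpos_of_nonneg_of_nonpos (by positivity) (hfactor r hr hRr)
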